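/- arXiv:1605.06484 — 3 statements merged into one kernel-verified Lean document; each statement's English description precedes it below -/
import Mathlib

section
/- Let p be an odd prime, let a ∈ ℂ_p and R > 0, and let f be holomorphic on the closed disc D⁺(a,R). Let b ∈ ℂ_p with |b − a|_p = R, let z ∈ D⁺(a,R) with z ∉ 𝒜(a,b), and let α ∈ ℤ with α ≥ 0. If |a − z|_p < R, then f(z) = ∫_{𝒜(a,b),Φ_α} f(x)/(x − z) dx. If |a − z|_p = R, let ζ be a root of unity in ℂ_p of order coprime to p with |(a − z)/(a − b) − ζ|_p < 1; then f(z) = (1 − ζ^{p^α}) · ∫_{𝒜(a,b),Φ_α} f(x)/(x − z) dx. -/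
/-!
Throughout, `K` plays the role of `ℂ_p`, the completion of an algebraic closure of `ℚ_p`:
it is a complete, algebraically closed, nonarchimedean (ultrametric) normed field equipped
with an isometric `ℚ_[p]`-algebra structure (hypothesis `hKext`).
-/

open scoped BigOperators

/-- A *path sequence*: a function defined (positive-valued and strictly increasing)
for `k ≥ k₀`, for some positive integer `k₀`. -/
structure PathSeq where
  toFun : ℕ → ℕ
  k₀ : ℕ
  k₀_pos : 0 < k₀
  pos : ∀ k, k₀ ≤ k → 0 < toFun k
  mono : ∀ k l, k₀ ≤ k → k < l → toFun k < toFun l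

/-- The Riemann-type sum `A_{f,φ}(k)` (with `N = φ(k)`):
`p^{-N} ∑_ζ (b - a) ζ · f (a + (b - a) ζ)`, `ζ` ranging over the `p^N`-th roots of unity. -/
noncomputable def Asum (p : ℕ) (K : Type*) [NormedField K] (a b : K) (f : K → K) (N : ℕ) : K :=
  ((p : K) ^ N)⁻¹ *
    ∑ ζ ∈ Polynomial.nthRootsFinset (p ^ N) (1 : K), (b - a) * ζ * f (a + (b - a) * ζ)

/-- `ψ` is, for `k ≥ k₀`, a subsequence of the path sequence `φ`. -/
def SubseqFrom (ψ φ : PathSeq) (k₀ : ℕ) : Prop :=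
  ∃ σ : ℕ → ℕ, (∀ k l, k₀ ≤ k → k < l → σ k < σ l) ∧
    ∀ k, k₀ ≤ k → φ.k₀ ≤ σ k ∧ ψ.toFun k = φ.toFun (σ k)

/-- An *interlocked* family of path sequences: nonempty, and any two members have a common
member-subsequence. -/
def Interlocked (Φ : Set PathSeq) : Prop :=
  Φ.Nonempty ∧ ∀ φ₁ ∈ Φ, ∀ φ₂ ∈ Φ, ∃ φ₃ ∈ Φ, ∃ k₀ : ℕ, 0 < k₀ ∧
    SubseqFrom φ₃ φ₁ k₀ ∧ SubseqFrom φ₃ φ₂ k₀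

/-- `∫_{𝒜(a,b),Φ} f(x) dx = L`: for every `ε > 0` there are `φ ∈ Φ` and `M` such that
`|A_{f,φ}(k) - L| < ε` for all `k > M` (in the domain of `φ`). -/
def HasIntegral (p : ℕ) (K : Type*) [NormedField K] (a b : K) (f : K → K)
    (Φ : Set PathSeq) (L : K) : Prop :=
  ∀ ε : ℝ, 0 < ε → ∃ φ ∈ Φ, ∃ M : ℕ, φ.k₀ ≤ M ∧
    ∀ k, M < k → ‖Asum p K a b f (φ.toFun k) - L‖ < ε

/-- `f` is holomorphic on `S`: its values on `S` are given by the single power series with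
coefficients `c`, centered at `b`, convergent on `S`. -/
def HolomorphicOn' (K : Type*) [NormedField K] (c : ℕ → K) (b : K) (f : K → K)
    (S : Set K) : Prop :=
  ∀ x ∈ S, Summable (fun n : ℕ => c n * (x - b) ^ n) ∧ f x = ∑' n : ℕ, c n * (x - b) ^ n

/-- The arc `𝒜(a,b)`: the open disc of radius `R = |a - b|` around `b`. -/
def arc (K : Type*) [NormedField K] (a b : K) : Set K := {x : K | ‖x - b‖ < ‖a - b‖}

/-- `c` are controlled coefficients of order `β` (for the radius `R`). -/
def Controlled (K : Type*) [NormedField K] (c : ℕ → K) (R β : ℝ) : Prop :=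
  ∃ M n₀ : ℝ, 0 < n₀ ∧ ∀ n : ℕ, n₀ < (n : ℝ) → ‖c n‖ * R ^ n < M * (n : ℝ) ^ β

/-- The interlocked family `Φ_α = {k ↦ α + λ k : λ ∈ ℤ⁺}`. -/
def PhiAlpha (α : ℕ) : Set PathSeq :=
  {φ : PathSeq | ∃ lam : ℕ, 0 < lam ∧ ∀ k : ℕ, φ.toFun k = α + lam * k}

/-!
Write `t = (z - a) / (b - a)` and `M = p ^ N`. Expanding `f` on the sphere `‖x - a‖ = ‖b - a‖` and
averaging over the `M`-th roots of unity gives the exact identity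
`(1 - t ^ M) * A_N = ∑ cₙ (b - a) ^ n t ^ (n % M)`, which differs from
`f z = ∑ cₙ (b - a) ^ n t ^ n` only in the terms with `n ≥ M`. These terms tend to zero, so by
the ultrametric inequality `A_N - f z / (1 - t ^ M) → 0`, and it remains to follow `t ^ p ^ N`.
If `‖t‖ < 1` it tends to `0`. If `t` is close to a root of unity `ζ` of order prime to `p`,
raising to the `p`-th power contracts `‖t - ζ‖` (the middle binomial coefficients are divisible
by `p`), so `t ^ p ^ N - ζ ^ p ^ N → 0`, while `ζ ^ p ^ N = ζ ^ p ^ α` along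
`N = α + φ(ord ζ) k`.
-/

open Finset Filter Topology

lemma Nat.dvd_add_self_sub_iff_eq_mod {M n i : ℕ} (hi : i < M) :
    M ∣ n + M - i ↔ i = n % M := by
  rw [← Nat.modEq_iff_dvd' (by omega), Nat.ModEq, Nat.add_mod_right, Nat.mod_eq_of_lt hi]

section RootsOfUnity

variable {K : Type*} [Field K]

lemma IsPrimitiveRoot.nthRootsFinset_one_eq_image [DecidableEq K] {η : K} {M : ℕ}
    (hη : IsPrimitiveRoot η M) (hM : 0 < M) :
    Polynomial.nthRootsFinset M (1 : K) = (range M).image (η ^ ·) := by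
  refine (eq_of_subset_of_card_le (fun x hx => ?_) ?_).symm
  · obtain ⟨i, -, rfl⟩ := mem_image.1 hx
    rw [Polynomial.mem_nthRootsFinset hM, ← pow_mul, mul_comm, pow_mul, hη.pow_eq_one, one_pow]
  · rw [card_image_of_injOn fun i hi j hj h => hη.pow_inj (mem_range.1 hi) (mem_range.1 hj) h,
      card_range, hη.card_nthRootsFinset]

variable [IsAlgClosed K]

lemma sum_nthRootsFinset_pow {M : ℕ} (hM : (M : K) ≠ 0) (j : ℕ) :
    ∑ ζ ∈ Polynomial.nthRootsFinset M (1 : K), ζ ^ j = if M ∣ j then (M : K) else 0 := by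
  classical
  have : NeZero (M : K) := ⟨hM⟩
  have hM₀ : 0 < M := Nat.pos_of_ne_zero (by rintro rfl; simp at hM)
  obtain ⟨η, hη⟩ := HasEnoughRootsOfUnity.exists_primitiveRoot K M
  rw [hη.nthRootsFinset_one_eq_image hM₀,
    sum_image fun i hi k hk h => hη.pow_inj (mem_range.1 hi) (mem_range.1 hk) h]
  simp_rw [← pow_mul, mul_comm _ j, pow_mul]
  split_ifs with hdvd
  · simp [(hη.pow_eq_one_iff_dvd j).2 hdvd]
  · have hne : η ^ j ≠ 1 := mt (hη.pow_eq_one_iff_dvd j).1 hdvd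
    rw [geom_sum_eq hne, ← pow_mul, mul_comm, pow_mul, hη.pow_eq_one, one_pow, sub_self, zero_div]

lemma sum_nthRootsFinset_pow_succ_div_sub {M : ℕ} (hM : (M : K) ≠ 0) {t : K} (ht : t ^ M ≠ 1)
    (n : ℕ) :
    ∑ ζ ∈ Polynomial.nthRootsFinset M (1 : K), ζ ^ (n + 1) / (ζ - t)
      = M * t ^ (n % M) / (1 - t ^ M) := by
  have hM₀ : 0 < M := Nat.pos_of_ne_zero (by rintro rfl; simp at hM)
  -- expand `1 / (ζ - t)` as a geometric sum, using `ζ ^ M = 1`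
  have hexpand : ∀ ζ ∈ Polynomial.nthRootsFinset M (1 : K),
      ζ ^ (n + 1) / (ζ - t) = (∑ i ∈ range M, t ^ i * ζ ^ (n + M - i)) / (1 - t ^ M) := by
    intro ζ hζ
    have hζM : ζ ^ M = 1 := (Polynomial.mem_nthRootsFinset hM₀ _).1 hζ
    have hζt : ζ - t ≠ 0 := sub_ne_zero.2 fun h => ht (h ▸ hζM)
    have hgeom : (∑ i ∈ range M, t ^ i * ζ ^ (M - 1 - i)) * (ζ - t) = 1 - t ^ M := by
      rw [← neg_sub t ζ, mul_neg, geom_sum₂_mul, hζM, neg_sub]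
    rw [div_eq_div_iff hζt (sub_ne_zero.2 (Ne.symm ht)), ← hgeom, ← mul_assoc, mul_sum]
    refine congrArg (· * _) (sum_congr rfl fun i hi => ?_)
    rw [show n + M - i = M - 1 - i + (n + 1) by have := mem_range.1 hi; omega]
    ring
  rw [sum_congr rfl hexpand, ← sum_div, sum_comm]
  simp_rw [← mul_sum, sum_nthRootsFinset_pow hM]
  congr 1
  calc ∑ i ∈ range M, t ^ i * (if M ∣ n + M - i then (M : K) else 0)
      = ∑ i ∈ range M, if n % M = i then t ^ i * M else 0 := sum_congr rfl fun i hi => by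
        simp only [Nat.dvd_add_self_sub_iff_eq_mod (mem_range.1 hi), eq_comm, mul_ite, mul_zero]
    _ = M * t ^ (n % M) := by
        rw [sum_ite_eq, if_pos (mem_range.2 (Nat.mod_lt _ hM₀)), mul_comm]

end RootsOfUnity

lemma tendsto_add_mul_atTop_nat (α : ℕ) {lam : ℕ} (hlam : 0 < lam) :
    Tendsto (fun k => α + lam * k) atTop atTop :=
  tendsto_atTop_mono (fun k => le_add_left (Nat.le_mul_of_pos_left k hlam)) tendsto_id

lemma pow_prime_pow_add_totient_mul {M : Type*} [Monoid M] {ξ : M} (hξ : IsOfFinOrder ξ) {p : ℕ}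
    (hcop : (orderOf ξ).Coprime p) (j k : ℕ) :
    ξ ^ p ^ (j + (orderOf ξ).totient * k) = ξ ^ p ^ j := by
  rw [hξ.pow_eq_pow_iff_modEq, pow_add, pow_mul]
  simpa using ((Nat.ModEq.pow_totient hcop.symm).pow k).mul_left (p ^ j)

lemma norm_eq_of_norm_sub_lt_right {E : Type*} [SeminormedAddCommGroup E] [IsUltrametricDist E]
    {x y : E} (h : ‖x - y‖ < ‖y‖) : ‖x‖ = ‖y‖ := by
  rw [← add_sub_cancel y x, IsUltrametricDist.norm_add_eq_max_of_norm_ne_norm h.ne',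
    max_eq_left h.le]

section Ultrametric

variable {K : Type*} [NormedField K] [IsUltrametricDist K]

lemma norm_natCast_le_norm_of_dvd {p m : ℕ} (h : p ∣ m) : ‖(m : K)‖ ≤ ‖(p : K)‖ := by
  obtain ⟨k, rfl⟩ := h
  rw [Nat.cast_mul, norm_mul]
  exact mul_le_of_le_one_right (norm_nonneg _) (IsUltrametricDist.norm_natCast_le_one K k)

lemma norm_sub_le_one {x y : K} (hx : ‖x‖ ≤ 1) (hy : ‖y‖ ≤ 1) : ‖x - y‖ ≤ 1 :=
  calc ‖x - y‖ = ‖x + -y‖ := by rw [sub_eq_add_neg]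
    _ ≤ max ‖x‖ ‖-y‖ := IsUltrametricDist.norm_add_le_max x (-y)
    _ ≤ 1 := max_le hx (by rwa [norm_neg])

variable {p : ℕ} [hp : Fact p.Prime]

lemma norm_pow_prime_sub_pow_prime_le {x y : K} (hx : ‖x‖ ≤ 1) (hy : ‖y‖ ≤ 1) :
    ‖x ^ p - y ^ p‖ ≤ ‖x - y‖ * max (‖x - y‖ ^ (p - 1)) ‖(p : K)‖ := by
  set δ := x - y
  have hexp : x ^ p - y ^ p
      = ∑ k ∈ range p, δ ^ (k + 1) * y ^ (p - (k + 1)) * (p.choose (k + 1) : K) := by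
    have h := add_pow δ y p
    rw [show δ + y = x by ring, sum_range_succ'] at h
    simp only [pow_zero, one_mul, Nat.sub_zero, Nat.choose_zero_right, Nat.cast_one, mul_one] at h
    rw [h, add_sub_cancel_right]
  rw [hexp]
  refine IsUltrametricDist.norm_sum_le_of_forall_le_of_nonneg (by positivity) fun k hk => ?_
  rw [norm_mul, norm_mul, norm_pow, norm_pow, pow_succ']
  have hyk : ‖y‖ ^ (p - (k + 1)) ≤ 1 := pow_le_one₀ (norm_nonneg _) hy
  have hδ : ‖δ‖ ≤ 1 := norm_sub_le_one hx hy
  rcases (Nat.succ_le_of_lt (mem_range.1 hk)).eq_or_lt with hkp | hkp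
  · subst hkp
    calc ‖δ‖ * ‖δ‖ ^ k * ‖y‖ ^ (k + 1 - (k + 1)) * ‖((k + 1).choose (k + 1) : K)‖
        = ‖δ‖ * ‖δ‖ ^ (k + 1 - 1) := by simp
      _ ≤ _ := mul_le_mul_of_nonneg_left (le_max_left _ _) (norm_nonneg _)
  · have hC : ‖(p.choose (k + 1) : K)‖ ≤ ‖(p : K)‖ :=
      norm_natCast_le_norm_of_dvd (hp.out.dvd_choose_self k.succ_ne_zero hkp)
    calc ‖δ‖ * ‖δ‖ ^ k * ‖y‖ ^ (p - (k + 1)) * ‖(p.choose (k + 1) : K)‖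
        ≤ ‖δ‖ * 1 * 1 * ‖(p : K)‖ := by
          gcongr; exact pow_le_one₀ (norm_nonneg _) hδ
      _ ≤ _ := by
          rw [mul_one, mul_one]
          exact mul_le_mul_of_nonneg_left (le_max_right _ _) (norm_nonneg _)

lemma norm_pow_prime_pow_sub_pow_prime_pow_le {x y : K} (hx : ‖x‖ ≤ 1) (hy : ‖y‖ ≤ 1) (j : ℕ) :
    ‖x ^ p ^ j - y ^ p ^ j‖ ≤ max (‖x - y‖ ^ (p - 1)) ‖(p : K)‖ ^ j * ‖x - y‖ := by
  set q := max (‖x - y‖ ^ (p - 1)) ‖(p : K)‖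
  have hq₀ : 0 ≤ q := le_max_of_le_right (norm_nonneg _)
  have hq₁ : q ≤ 1 := max_le (pow_le_one₀ (norm_nonneg _) (norm_sub_le_one hx hy))
    (IsUltrametricDist.norm_natCast_le_one K p)
  induction j with
  | zero => simp
  | succ j ih =>
    have hpow : ∀ w : K, ‖w‖ ≤ 1 → ‖w ^ p ^ j‖ ≤ 1 := fun w hw => by
      rw [norm_pow]; exact pow_le_one₀ (norm_nonneg _) hw
    have hj : ‖x ^ p ^ j - y ^ p ^ j‖ ≤ ‖x - y‖ :=
      ih.trans (mul_le_of_le_one_left (norm_nonneg _) (pow_le_one₀ hq₀ hq₁))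
    have hmax : max (‖x ^ p ^ j - y ^ p ^ j‖ ^ (p - 1)) ‖(p : K)‖ ≤ q :=
      max_le_max (pow_le_pow_left₀ (norm_nonneg _) hj _) le_rfl
    rw [pow_succ, pow_mul, pow_mul]
    calc ‖(x ^ p ^ j) ^ p - (y ^ p ^ j) ^ p‖
        ≤ ‖x ^ p ^ j - y ^ p ^ j‖ * max (‖x ^ p ^ j - y ^ p ^ j‖ ^ (p - 1)) ‖(p : K)‖ :=
          norm_pow_prime_sub_pow_prime_le (hpow x hx) (hpow y hy)
      _ ≤ q ^ j * ‖x - y‖ * q := by gcongr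
      _ = q ^ (j + 1) * ‖x - y‖ := by ring

lemma tendsto_pow_prime_pow_sub_pow_prime_pow {x y : K} (hx : ‖x‖ ≤ 1) (hy : ‖y‖ ≤ 1)
    (hxy : ‖x - y‖ < 1) (hpK : ‖(p : K)‖ < 1) :
    Tendsto (fun j => x ^ p ^ j - y ^ p ^ j) atTop (𝓝 0) := by
  have hq : max (‖x - y‖ ^ (p - 1)) ‖(p : K)‖ < 1 :=
    max_lt (pow_lt_one₀ (norm_nonneg _) hxy (Nat.sub_ne_zero_of_lt hp.out.one_lt)) hpK
  refine squeeze_zero_norm (norm_pow_prime_pow_sub_pow_prime_pow_le hx hy) ?_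
  simpa using
    (tendsto_pow_atTop_nhds_zero_of_lt_one (le_max_of_le_right (norm_nonneg _)) hq).mul_const
      ‖x - y‖

lemma tendsto_pow_prime_pow_add_totient_mul {x ζ : K} (hx : ‖x‖ ≤ 1) (hζ : IsOfFinOrder ζ)
    (hcop : (orderOf ζ).Coprime p) (hxζ : ‖x - ζ‖ < 1) (hpK : ‖(p : K)‖ < 1) (α : ℕ) :
    Tendsto (fun k => x ^ p ^ (α + (orderOf ζ).totient * k)) atTop (𝓝 (ζ ^ p ^ α)) := by
  have h := (tendsto_pow_prime_pow_sub_pow_prime_pow hx hζ.norm_eq_one.le hxζ hpK).comp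
    (tendsto_add_mul_atTop_nat α (Nat.totient_pos.2 hζ.orderOf_pos))
  simp only [Function.comp_def, pow_prime_pow_add_totient_mul hζ hcop] at h
  exact tendsto_sub_nhds_zero_iff.1 h

lemma norm_one_sub_pow_prime_pow_eq_one (hpK : ‖(p : K)‖ < 1) {ξ : K} (hξ : IsOfFinOrder ξ)
    (hcop : (orderOf ξ).Coprime p) (hξ₁ : ξ ≠ 1) (j : ℕ) : ‖1 - ξ ^ p ^ j‖ = 1 := by
  refine (norm_sub_le_one norm_one.le (hξ.pow.norm_eq_one.le)).antisymm (not_lt.1 fun hlt => ?_)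
  -- the constant sequence `1 = 1 ^ p ^ N` would converge to `ξ ^ p ^ j`
  have hlim := tendsto_pow_prime_pow_add_totient_mul norm_one.le hξ.pow
    (hcop.coprime_dvd_left (orderOf_pow_dvd _)) hlt hpK 0
  simp only [one_pow, pow_zero, pow_one] at hlim
  have hξj : ξ ^ p ^ j = 1 := (tendsto_nhds_unique tendsto_const_nhds hlim).symm
  exact hξ₁ (orderOf_eq_one_iff.1
    ((hcop.pow_right j).eq_one_of_dvd (orderOf_dvd_of_pow_eq_one hξj)))

end Ultrametric

def PathSeq.affine (α lam : ℕ) (hlam : 0 < lam) : PathSeq where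
  toFun k := α + lam * k
  k₀ := 1
  k₀_pos := one_pos
  pos k hk := by have := Nat.mul_le_mul hlam hk; omega
  mono k l _ hkl := by have := Nat.mul_lt_mul_of_pos_left hkl hlam; omega

lemma hasIntegral_PhiAlpha_of_tendsto {p : ℕ} {K : Type*} [NormedField K] {a b : K} {F : K → K}
    {α lam : ℕ} (hlam : 0 < lam) {L : K}
    (h : Tendsto (fun k => Asum p K a b F (α + lam * k)) atTop (𝓝 L)) :
    HasIntegral p K a b F (PhiAlpha α) L := by
  intro ε hε
  obtain ⟨M, hM⟩ := eventually_atTop.1 (Metric.tendsto_nhds.1 h ε hε)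
  exact ⟨PathSeq.affine α lam hlam, ⟨lam, hlam, fun _ => rfl⟩, M + 1, by simp [PathSeq.affine],
    fun k hk => by rw [← dist_eq_norm]; exact hM k (by omega)⟩

section RiemannSum

variable {p : ℕ} {K : Type*} [NormedField K] {a b z : K} {c : ℕ → K} {f : K → K}

lemma hasSum_Asum [IsAlgClosed K] (hpK : (p : K) ≠ 0) (hab : b ≠ a)
    (hf : HolomorphicOn' K c a f {x | ‖x - a‖ ≤ ‖b - a‖}) {N : ℕ}
    (ht : ((z - a) / (b - a)) ^ p ^ N ≠ 1) :
    HasSum (fun n => c n * (b - a) ^ n * ((z - a) / (b - a)) ^ (n % p ^ N))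
      ((1 - ((z - a) / (b - a)) ^ p ^ N) * Asum p K a b (fun x => f x / (x - z)) N) := by
  set u := b - a
  set t := (z - a) / u
  have hu : u ≠ 0 := sub_ne_zero.2 hab
  have hMK : ((p ^ N : ℕ) : K) ≠ 0 := by rw [Nat.cast_pow]; exact pow_ne_zero _ hpK
  have hM₀ : 0 < p ^ N := Nat.pos_of_ne_zero (by rintro h; simp [h] at hMK)
  have hterm : ∀ ζ ∈ Polynomial.nthRootsFinset (p ^ N) (1 : K),
      HasSum (fun n => c n * u ^ n * (ζ ^ (n + 1) / (ζ - t)))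
        (u * ζ * (f (a + u * ζ) / (a + u * ζ - z))) := by
    intro ζ hζ
    have hζM : ζ ^ p ^ N = 1 := (Polynomial.mem_nthRootsFinset hM₀ _).1 hζ
    have hζt : ζ - t ≠ 0 := sub_ne_zero.2 fun h => ht (h ▸ hζM)
    have hζn : ‖ζ‖ = 1 := (isOfFinOrder_iff_pow_eq_one.2 ⟨_, hM₀, hζM⟩).norm_eq_one
    obtain ⟨hsum, hval⟩ := hf (a + u * ζ) (by simp [norm_mul, hζn])
    rw [add_sub_cancel_left] at hsum hval
    have hxz : a + u * ζ - z = u * (ζ - t) := by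
      rw [mul_sub, mul_div_cancel₀ _ hu]; ring
    rw [hval, hxz, show ∀ s : K, u * ζ * (s / (u * (ζ - t))) = ζ / (ζ - t) * s by
      intro s; field_simp]
    exact (hsum.hasSum.mul_left (ζ / (ζ - t))).congr_fun fun n => by rw [mul_pow, pow_succ]; ring
  have hsum := hasSum_sum hterm
  simp_rw [← mul_sum, sum_nthRootsFinset_pow_succ_div_sub hMK ht] at hsum
  rw [show (1 - t ^ p ^ N) * Asum p K a b (fun x => f x / (x - z)) N
      = (1 - t ^ p ^ N) / (p ^ N : ℕ) * ∑ ζ ∈ Polynomial.nthRootsFinset (p ^ N) (1 : K),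
          u * ζ * (f (a + u * ζ) / (a + u * ζ - z)) by
    rw [Asum, Nat.cast_pow, div_eq_mul_inv]; ring]
  exact (hsum.mul_left _).congr_fun fun n => by field_simp

variable [IsAlgClosed K] [IsUltrametricDist K]

lemma norm_Asum_sub_div_le (hpK : (p : K) ≠ 0) (hab : b ≠ a)
    (hf : HolomorphicOn' K c a f {x | ‖x - a‖ ≤ ‖b - a‖}) (hz : ‖z - a‖ ≤ ‖b - a‖) {N : ℕ}
    (h1 : ‖1 - ((z - a) / (b - a)) ^ p ^ N‖ = 1) {ε : ℝ} (hε : 0 ≤ ε)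
    (hc : ∀ n, p ^ N ≤ n → ‖c n * (b - a) ^ n‖ ≤ ε) :
    ‖Asum p K a b (fun x => f x / (x - z)) N - f z / (1 - ((z - a) / (b - a)) ^ p ^ N)‖ ≤ ε := by
  set t := (z - a) / (b - a)
  have ht : ∀ m : ℕ, ‖t ^ m‖ ≤ 1 := fun m => by
    rw [norm_pow, norm_div]
    exact pow_le_one₀ (by positivity) (div_le_one_of_le₀ hz (norm_nonneg _))
  have h1t : 1 - t ^ p ^ N ≠ 0 := norm_ne_zero_iff.1 (h1 ▸ one_ne_zero)
  have hS : HasSum (fun n => c n * (b - a) ^ n * t ^ (n % p ^ N))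
      ((1 - t ^ p ^ N) * Asum p K a b (fun x => f x / (x - z)) N) :=
    hasSum_Asum hpK hab hf fun h => h1t (by rw [h, sub_self])
  have hfz : HasSum (fun n => c n * (b - a) ^ n * t ^ n) (f z) := by
    obtain ⟨hsum, hval⟩ := hf z hz
    rw [hval]
    refine hsum.hasSum.congr_fun fun n => ?_
    rw [mul_assoc, ← mul_pow, mul_div_cancel₀ _ (sub_ne_zero.2 hab)]
  have hkey : ‖(1 - t ^ p ^ N) * Asum p K a b (fun x => f x / (x - z)) N - f z‖ ≤ ε := by
    rw [← (hS.sub hfz).tsum_eq]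
    refine IsUltrametricDist.norm_tsum_le_of_forall_le_of_nonneg hε fun n => ?_
    rw [← mul_sub, norm_mul]
    rcases lt_or_ge n (p ^ N) with hn | hn
    · simpa [Nat.mod_eq_of_lt hn] using hε
    · exact (mul_le_of_le_one_right (norm_nonneg _) (norm_sub_le_one (ht _) (ht _))).trans
        (hc n hn)
  calc _ = ‖((1 - t ^ p ^ N) * Asum p K a b (fun x => f x / (x - z)) N - f z)
        / (1 - t ^ p ^ N)‖ := by congr 1; field_simp
    _ ≤ ε := by rwa [norm_div, h1, div_one]

lemma tendsto_Asum (hp : 1 < p) (hpK : (p : K) ≠ 0) (hab : b ≠ a)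
    (hf : HolomorphicOn' K c a f {x | ‖x - a‖ ≤ ‖b - a‖}) (hz : ‖z - a‖ ≤ ‖b - a‖)
    {N : ℕ → ℕ} (hN : Tendsto N atTop atTop) {w : K}
    (hw : Tendsto (fun k => ((z - a) / (b - a)) ^ p ^ N k) atTop (𝓝 w)) (hw1 : ‖1 - w‖ = 1) :
    Tendsto (fun k => Asum p K a b (fun x => f x / (x - z)) (N k)) atTop (𝓝 (f z / (1 - w))) := by
  set t := (z - a) / (b - a)
  have hev : ∀ᶠ k in atTop, ‖1 - t ^ p ^ N k‖ = 1 := by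
    filter_upwards [Metric.tendsto_nhds.1 hw 1 one_pos] with k hk
    rw [← hw1]
    refine norm_eq_of_norm_sub_lt_right ?_
    rwa [sub_sub_sub_cancel_left, hw1, ← dist_eq_norm']
  have hc : Tendsto (fun n => ‖c n * (b - a) ^ n‖) atTop (𝓝 0) :=
    tendsto_zero_iff_norm_tendsto_zero.1 (hf b (le_refl ‖b - a‖)).1.tendsto_atTop_zero
  have herr : Tendsto (fun k => Asum p K a b (fun x => f x / (x - z)) (N k)
      - f z / (1 - t ^ p ^ N k)) atTop (𝓝 0) := by
    refine Metric.tendsto_nhds.2 fun ε hε => ?_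
    obtain ⟨n₀, hn₀⟩ := eventually_atTop.1 (hc.eventually (gt_mem_nhds (half_pos hε)))
    filter_upwards [hev, ((tendsto_pow_atTop_atTop_of_one_lt hp).comp hN).eventually_ge_atTop n₀]
      with k h1 hk
    rw [dist_zero_right]
    exact (norm_Asum_sub_div_le hpK hab hf hz h1 (half_pos hε).le fun n hn =>
      (hn₀ n (hk.trans hn)).le).trans_lt (half_lt_self hε)
  have hlim : Tendsto (fun k => f z / (1 - t ^ p ^ N k)) atTop (𝓝 (f z / (1 - w))) :=
    tendsto_const_nhds.div (tendsto_const_nhds.sub hw) (norm_ne_zero_iff.1 (hw1 ▸ one_ne_zero))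
  simpa using herr.add hlim

lemma hasIntegral_PhiAlpha_div_one_sub (hp : 1 < p) (hpK : (p : K) ≠ 0) (hab : b ≠ a)
    (hf : HolomorphicOn' K c a f {x | ‖x - a‖ ≤ ‖b - a‖}) (hz : ‖z - a‖ ≤ ‖b - a‖)
    {α lam : ℕ} (hlam : 0 < lam) {w : K}
    (hw : Tendsto (fun k => ((z - a) / (b - a)) ^ p ^ (α + lam * k)) atTop (𝓝 w))
    (hw1 : ‖1 - w‖ = 1) :
    HasIntegral p K a b (fun x => f x / (x - z)) (PhiAlpha α) (f z / (1 - w)) :=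
  hasIntegral_PhiAlpha_of_tendsto hlam
    (tendsto_Asum hp hpK hab hf hz (tendsto_add_mul_atTop_nat α hlam) hw hw1)

lemma hasIntegral_PhiAlpha_of_norm_sub_lt (hp : 1 < p) (hpK : (p : K) ≠ 0)
    (hf : HolomorphicOn' K c a f {x | ‖x - a‖ ≤ ‖b - a‖}) (hz : ‖z - a‖ < ‖b - a‖) (α : ℕ) :
    HasIntegral p K a b (fun x => f x / (x - z)) (PhiAlpha α) (f z) := by
  have hab : b ≠ a := by rintro rfl; exact (norm_nonneg _).not_gt (by simpa using hz)
  have ht : ‖(z - a) / (b - a)‖ < 1 := by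
    rwa [norm_div, div_lt_one (norm_pos_iff.2 (sub_ne_zero.2 hab))]
  simpa using hasIntegral_PhiAlpha_div_one_sub hp hpK hab hf hz.le one_pos
    ((tendsto_pow_atTop_nhds_zero_of_norm_lt_one ht).comp
      ((tendsto_pow_atTop_atTop_of_one_lt hp).comp (tendsto_add_mul_atTop_nat α one_pos)))
    (by simp)

lemma exists_hasIntegral_PhiAlpha_of_norm_sub_eq [Fact p.Prime] (hpK₀ : (p : K) ≠ 0)
    (hpK₁ : ‖(p : K)‖ < 1) (hf : HolomorphicOn' K c a f {x | ‖x - a‖ ≤ ‖b - a‖})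
    (hz : ‖z - a‖ = ‖b - a‖) (hz' : z ∉ arc K a b) {ζ : K} (hζ : IsOfFinOrder ζ)
    (hcop : (orderOf ζ).Coprime p) (hclose : ‖(a - z) / (a - b) - ζ‖ < 1) (α : ℕ) :
    ∃ I : K, HasIntegral p K a b (fun x => f x / (x - z)) (PhiAlpha α) I ∧
      f z = (1 - ζ ^ p ^ α) * I := by
  have hab : b ≠ a := by rintro rfl; simp [hζ.norm_eq_one] at hclose
  have hab' : a - b ≠ 0 := sub_ne_zero.2 hab.symm
  have hζ₁ : ζ ≠ 1 := by
    rintro rfl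
    refine hz' ?_
    rwa [div_sub_one hab', sub_sub_sub_cancel_left, norm_div, norm_sub_rev b,
      div_lt_one (norm_pos_iff.2 hab')] at hclose
  have ht : (z - a) / (b - a) = (a - z) / (a - b) := by
    rw [← neg_sub a z, ← neg_sub a b, neg_div_neg_eq]
  have ht₁ : ‖(z - a) / (b - a)‖ ≤ 1 := by
    rw [norm_div]; exact div_le_one_of_le₀ hz.le (norm_nonneg _)
  have hw₁ := norm_one_sub_pow_prime_pow_eq_one hpK₁ hζ hcop hζ₁ α
  refine ⟨_, hasIntegral_PhiAlpha_div_one_sub (Fact.out : p.Prime).one_lt hpK₀ hab hf hz.le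
    (Nat.totient_pos.2 hζ.orderOf_pos)
    (tendsto_pow_prime_pow_add_totient_mul ht₁ hζ hcop (ht ▸ hclose) hpK₁ α) hw₁, ?_⟩
  rw [mul_div_cancel₀ _ (norm_ne_zero_iff.1 (hw₁ ▸ one_ne_zero))]

end RiemannSum

theorem stmt_15_general (p : ℕ) [Fact (Nat.Prime p)]
    (K : Type*) [NormedField K] [IsAlgClosed K] [IsUltrametricDist K]
    [Algebra ℚ_[p] K] (hKext : ∀ q : ℚ_[p], ‖algebraMap ℚ_[p] K q‖ = ‖q‖)
    (a : K) (R : ℝ) (c : ℕ → K) (f : K → K)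
    (hf : HolomorphicOn' K c a f {x : K | ‖x - a‖ ≤ R})
    (b : K) (hb : ‖b - a‖ = R) (z : K) (hz' : z ∉ arc K a b)
    (α : ℕ) :
    (‖a - z‖ < R →
      HasIntegral p K a b (fun x => f x / (x - z)) (PhiAlpha α) (f z)) ∧
    (‖a - z‖ = R → ∀ ζ : K, IsOfFinOrder ζ → (orderOf ζ).Coprime p →
      ‖(a - z) / (a - b) - ζ‖ < 1 →
      ∃ I : K, HasIntegral p K a b (fun x => f x / (x - z)) (PhiAlpha α) I ∧
        f z = (1 - ζ ^ p ^ α) * I) := by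
  subst hb
  have hp : p.Prime := Fact.out
  have hpK : ‖(p : K)‖ = (p : ℝ)⁻¹ := by
    rw [← map_natCast (algebraMap ℚ_[p] K), hKext, Padic.norm_p]
  have hpK₀ : (p : K) ≠ 0 := norm_ne_zero_iff.1 (hpK ▸ inv_ne_zero (Nat.cast_ne_zero.2 hp.ne_zero))
  have hpK₁ : ‖(p : K)‖ < 1 := hpK ▸ inv_lt_one_of_one_lt₀ (by exact_mod_cast hp.one_lt)
  exact ⟨fun hlt => hasIntegral_PhiAlpha_of_norm_sub_lt hp.one_lt hpK₀ hf
      (norm_sub_rev a z ▸ hlt) α,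
    fun heq ζ hζ hcop hclose => exists_hasIntegral_PhiAlpha_of_norm_sub_eq hpK₀ hpK₁ hf
      (norm_sub_rev a z ▸ heq) hz' hζ hcop hclose α⟩

/-- (Cauchy's integral formula on closed discs) Let `f` be holomorphic on
`D⁺(a,R)`, `|b - a| = R`, `z ∈ D⁺(a,R) \ 𝒜(a,b)`, `α ≥ 0`. If `|a - z| < R` then
`f(z) = ∫_{𝒜(a,b),Φ_α} f(x)/(x-z) dx`; if `|a - z| = R` and `ζ` is the root of unity of
order coprime to `p` with `|(a-z)/(a-b) - ζ| < 1`, then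
`f(z) = (1 - ζ^{p^α}) ∫_{𝒜(a,b),Φ_α} f(x)/(x-z) dx`. -/
theorem stmt_15 (p : ℕ) [Fact (Nat.Prime p)] (hp2 : p ≠ 2)
    (K : Type*) [NormedField K] [CompleteSpace K] [IsAlgClosed K] [IsUltrametricDist K]
    [Algebra ℚ_[p] K] (hKext : ∀ q : ℚ_[p], ‖algebraMap ℚ_[p] K q‖ = ‖q‖)
    (a : K) (R : ℝ) (hR : 0 < R) (c : ℕ → K) (f : K → K)
    (hf : HolomorphicOn' K c a f {x : K | ‖x - a‖ ≤ R})
    (b : K) (hb : ‖b - a‖ = R) (z : K) (hz : ‖z - a‖ ≤ R) (hz' : z ∉ arc K a b)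
    (α : ℕ) :
    (‖a - z‖ < R →
      HasIntegral p K a b (fun x => f x / (x - z)) (PhiAlpha α) (f z)) ∧
    (‖a - z‖ = R → ∀ ζ : K, IsOfFinOrder ζ → (orderOf ζ).Coprime p →
      ‖(a - z) / (a - b) - ζ‖ < 1 →
      ∃ I : K, HasIntegral p K a b (fun x => f x / (x - z)) (PhiAlpha α) I ∧
        f z = (1 - ζ ^ p ^ α) * I) :=
  stmt_15_general p K hKext a R c f hf b hb z hz' α
end

section
/- Let n be a positive integer and let x₁, …, x_n, b₁, …, b_n be indeterminates over ℤ. In the polynomial ring ℤ[x₁,…,x_n,b₁,…,b_n], the determinant of the n×n matrix whose (i,j)-entry is ∏_{k ≠ j} (x_k − b_i) equals ∏_{1 ≤ i < j ≤ n} (b_j − b_i)(x_i − x_j). Equivalently, in the field of rational functions, det((x_i − b_i)/(x_j − b_i))_{1≤i,j≤n} = ∏_{i≠j} (x_j − b_i)^{−1} · ∏_{i<j} (b_j − b_i)(x_i − x_j). -/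
open MvPolynomial

namespace Stmt18Aux

variable (n : ℕ)

/-- The base ring. -/
local notation "R" => MvPolynomial (Fin n ⊕ Fin n) ℤ

/-- The polynomial `∏_{k ≠ j} (x_k - T)` in one variable `T` over `R`. -/
noncomputable def P (j : Fin n) : Polynomial R :=
  ∏ k ∈ Finset.univ.erase j, (Polynomial.C (X (Sum.inl k)) - Polynomial.X)

lemma natDegree_P_lt (hn : 0 < n) (j : Fin n) : (P n j).natDegree < n := by
  have h1 : (P n j).natDegree ≤
      ∑ k ∈ Finset.univ.erase j,
        (Polynomial.C (X (Sum.inl k) : R) - Polynomial.X).natDegree :=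
    Polynomial.natDegree_prod_le _ _
  have h2 : ∑ k ∈ Finset.univ.erase j,
      (Polynomial.C (X (Sum.inl k) : R) - Polynomial.X).natDegree ≤
      ∑ _k ∈ Finset.univ.erase j, 1 := by
    refine Finset.sum_le_sum fun k _ => ?_
    refine le_trans (Polynomial.natDegree_sub_le _ _) ?_
    simp [Polynomial.natDegree_X, Polynomial.natDegree_C]
  have h3 : ∑ _k ∈ Finset.univ.erase j, 1 = n - 1 := by
    simp [Finset.card_erase_of_mem]
  omega

lemma eval_P (y : R) (j : Fin n) :
    (P n j).eval y = ∏ k ∈ Finset.univ.erase j, ((X (Sum.inl k) : R) - y) := by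
  simp [P, Polynomial.eval_prod]

lemma eval_P_sum (hn : 0 < n) (y : R) (j : Fin n) :
    (P n j).eval y = ∑ m : Fin n, y ^ (m : ℕ) * (P n j).coeff m := by
  rw [Polynomial.eval_eq_sum_range' (natDegree_P_lt n hn j), ← Fin.sum_univ_eq_sum_range]
  exact Finset.sum_congr rfl fun m _ => mul_comm _ _

/-- The coefficient matrix. -/
noncomputable def B : Matrix (Fin n) (Fin n) R := fun m j => (P n j).coeff m

lemma M_eq (hn : 0 < n) :
    (Matrix.of fun i j : Fin n =>
        ∏ k ∈ Finset.univ.erase j,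
          ((X (Sum.inl k) : R) - X (Sum.inr i)))
      = Matrix.vandermonde (fun i : Fin n => (X (Sum.inr i) : R)) * B n := by
  refine Matrix.ext fun i j => ?_
  rw [Matrix.mul_apply]
  rw [Matrix.of_apply, ← eval_P, eval_P_sum n hn]
  rfl

lemma VxB_eq (hn : 0 < n) :
    Matrix.vandermonde (fun i : Fin n => (X (Sum.inl i) : R)) * B n
      = Matrix.diagonal (fun j : Fin n =>
          ∏ k ∈ Finset.univ.erase j, ((X (Sum.inl k) : R) - X (Sum.inl j))) := by
  refine Matrix.ext fun i j => ?_
  rw [Matrix.mul_apply]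
  have : ∑ m : Fin n, Matrix.vandermonde (fun i : Fin n => (X (Sum.inl i) : R)) i m * B n m j
      = (P n j).eval (X (Sum.inl i)) := by
    rw [eval_P_sum n hn]; rfl
  rw [this, eval_P]
  rcases eq_or_ne i j with h | h
  · subst h; simp [Matrix.diagonal_apply_eq]
  · rw [Matrix.diagonal_apply_ne _ h]
    apply Finset.prod_eq_zero (Finset.mem_erase.mpr ⟨h, Finset.mem_univ i⟩)
    exact sub_self _

lemma erase_eq_Iio_union_Ioi (j : Fin n) :
    Finset.univ.erase j = Finset.Iio j ∪ Finset.Ioi j := by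
  ext k
  simp only [Finset.mem_erase, Finset.mem_univ, and_true, Finset.mem_union, Finset.mem_Iio,
    Finset.mem_Ioi]
  exact ne_iff_lt_or_gt

/-- Splitting a product over all ordered pairs of distinct indices. -/
lemma prod_erase_split {M : Type*} [CommMonoid M] (f : Fin n → Fin n → M) :
    ∏ j : Fin n, ∏ k ∈ Finset.univ.erase j, f k j
      = ∏ i : Fin n, ∏ j ∈ Finset.Ioi i, f j i * f i j := by
  have hsplit : ∀ j : Fin n, ∏ k ∈ Finset.univ.erase j, f k j
      = (∏ k ∈ Finset.Iio j, f k j) * ∏ k ∈ Finset.Ioi j, f k j := by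
    intro j
    rw [erase_eq_Iio_union_Ioi, Finset.prod_union]
    exact Finset.disjoint_left.mpr fun a ha hb => absurd (Finset.mem_Ioi.mp hb)
      (not_lt.mpr (le_of_lt (Finset.mem_Iio.mp ha)))
  calc ∏ j : Fin n, ∏ k ∈ Finset.univ.erase j, f k j
      = (∏ j : Fin n, ∏ k ∈ Finset.Iio j, f k j) *
        ∏ j : Fin n, ∏ k ∈ Finset.Ioi j, f k j := by
        rw [← Finset.prod_mul_distrib]; exact Finset.prod_congr rfl fun j _ => hsplit j
    _ = (∏ i : Fin n, ∏ j ∈ Finset.Ioi i, f i j) *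
        ∏ i : Fin n, ∏ j ∈ Finset.Ioi i, f j i := by
        congr 1
        refine Finset.prod_comm' fun x y => ?_
        simp [Finset.mem_Iio, Finset.mem_Ioi]
    _ = ∏ i : Fin n, ∏ j ∈ Finset.Ioi i, f j i * f i j := by
        rw [mul_comm, ← Finset.prod_mul_distrib]
        exact Finset.prod_congr rfl fun i _ => by rw [← Finset.prod_mul_distrib]

end Stmt18Aux

/-- In `ℤ[x₁,…,x_n,b₁,…,b_n]` (here `X (Sum.inl i) = xᵢ` and
`X (Sum.inr i) = bᵢ`), the determinant of the `n × n` matrix with `(i,j)`-entry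
`∏_{k ≠ j} (x_k - b_i)` equals `∏_{i < j} (b_j - b_i)(x_i - x_j)`. -/
theorem stmt_18 (n : ℕ) (hn : 0 < n) :
    Matrix.det (Matrix.of fun i j : Fin n =>
        ∏ k ∈ Finset.univ.erase j,
          ((X (Sum.inl k) : MvPolynomial (Fin n ⊕ Fin n) ℤ) - X (Sum.inr i)))
      = ∏ i : Fin n, ∏ j ∈ Finset.Ioi i,
          (((X (Sum.inr j) : MvPolynomial (Fin n ⊕ Fin n) ℤ) - X (Sum.inr i)) *
            ((X (Sum.inl i) : MvPolynomial (Fin n ⊕ Fin n) ℤ) - X (Sum.inl j))) := by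
  set R := MvPolynomial (Fin n ⊕ Fin n) ℤ
  set Vx := Matrix.vandermonde (fun i : Fin n => (X (Sum.inl i) : R)) with hVxdef
  set Vb := Matrix.vandermonde (fun i : Fin n => (X (Sum.inr i) : R)) with hVbdef
  have hdetVx : Vx.det = ∏ i : Fin n, ∏ j ∈ Finset.Ioi i,
      ((X (Sum.inl j) : R) - X (Sum.inl i)) := Matrix.det_vandermonde _
  have hdetVb : Vb.det = ∏ i : Fin n, ∏ j ∈ Finset.Ioi i,
      ((X (Sum.inr j) : R) - X (Sum.inr i)) := Matrix.det_vandermonde _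
  have hVxne : Vx.det ≠ 0 := by
    rw [hdetVx]
    rw [Finset.prod_ne_zero_iff]
    intro i _
    rw [Finset.prod_ne_zero_iff]
    intro j hj
    rw [sub_ne_zero]
    intro h
    have := MvPolynomial.X_injective h
    have hij : i < j := Finset.mem_Ioi.mp hj
    simp only [Sum.inl.injEq] at this
    exact absurd this (ne_of_gt hij)
  apply mul_left_cancel₀ hVxne
  have hM := Stmt18Aux.M_eq n hn
  have hD := Stmt18Aux.VxB_eq n hn
  have hdetD : (Vx * Stmt18Aux.B n).det
      = ∏ j : Fin n, ∏ k ∈ Finset.univ.erase j,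
          ((X (Sum.inl k) : R) - X (Sum.inl j)) := by
    rw [hD, Matrix.det_diagonal]
  have key : ∏ j : Fin n, ∏ k ∈ Finset.univ.erase j,
        ((X (Sum.inl k) : R) - X (Sum.inl j))
      = (∏ i : Fin n, ∏ j ∈ Finset.Ioi i, ((X (Sum.inl j) : R) - X (Sum.inl i))) *
        ∏ i : Fin n, ∏ j ∈ Finset.Ioi i, ((X (Sum.inl i) : R) - X (Sum.inl j)) := by
    rw [Stmt18Aux.prod_erase_split n (fun k j => (X (Sum.inl k) : R) - X (Sum.inl j))]
    rw [← Finset.prod_mul_distrib]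
    exact Finset.prod_congr rfl fun i _ => by rw [← Finset.prod_mul_distrib]
  calc Vx.det * Matrix.det (Matrix.of fun i j : Fin n =>
        ∏ k ∈ Finset.univ.erase j, ((X (Sum.inl k) : R) - X (Sum.inr i)))
      = Vx.det * (Vb.det * (Stmt18Aux.B n).det) := by rw [hM, Matrix.det_mul]
    _ = Vb.det * (Vx * Stmt18Aux.B n).det := by rw [Matrix.det_mul]; ring
    _ = Vb.det * ((∏ i : Fin n, ∏ j ∈ Finset.Ioi i, ((X (Sum.inl j) : R) - X (Sum.inl i))) *
        ∏ i : Fin n, ∏ j ∈ Finset.Ioi i, ((X (Sum.inl i) : R) - X (Sum.inl j))) := by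
        rw [hdetD, key]
    _ = Vx.det * ∏ i : Fin n, ∏ j ∈ Finset.Ioi i,
          (((X (Sum.inr j) : R) - X (Sum.inr i)) *
            ((X (Sum.inl i) : R) - X (Sum.inl j))) := by
        rw [hdetVx, hdetVb]
        rw [show (∏ i : Fin n, ∏ j ∈ Finset.Ioi i,
          (((X (Sum.inr j) : R) - X (Sum.inr i)) *
            ((X (Sum.inl i) : R) - X (Sum.inl j))))
          = (∏ i : Fin n, ∏ j ∈ Finset.Ioi i, ((X (Sum.inr j) : R) - X (Sum.inr i))) *
            ∏ i : Fin n, ∏ j ∈ Finset.Ioi i, ((X (Sum.inl i) : R) - X (Sum.inl j)) from by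
          rw [← Finset.prod_mul_distrib]
          exact Finset.prod_congr rfl fun i _ => by rw [← Finset.prod_mul_distrib]]
        ring
end

section
/- Let p be an odd prime, let R > 0, and let x₁, …, x_n, b₁, …, b_n ∈ ℂ_p satisfy |x_i − x_j|_p = R and |b_i − b_j|_p = R for all i ≠ j, and |x_i − b_j|_p = R for all i, j. Let α ∈ ℤ with α ≥ 0. For each pair i ≠ j, let ζ_{ij} be a root of unity in ℂ_p of order coprime to p with |(x_i − x_j)/(x_i − b_i) − ζ_{ij}|_p < 1 (such ζ_{ij} satisfies ζ_{ij} ≠ 1). Define the n×n matrix D_α by (D_α)_{ii} = 1 and (D_α)_{ij} = 1/(1 − ζ_{ij}^{p^α}) for i ≠ j. Then |det(D_α)|_p = 1. -/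
/-!
Throughout, `K` plays the role of `ℂ_p`, the completion of an algebraic closure of `ℚ_p`:
it is a complete, algebraically closed, nonarchimedean (ultrametric) normed field equipped
with an isometric `ℚ_[p]`-algebra structure (hypothesis `hKext`).
-/

open scoped BigOperators

/-!
After the affine change of variables `z ↦ (z - b_{i₀}) / (x_{i₀} - b_{i₀})` all points lie in the
closed unit ball at mutual distance `1`, so they have pairwise distinct residues in the residue
field `k`, which has characteristic `p`. There `ζ_{ij}` reduces to `u_{ij} = (x_i - x_j)/(x_i - b_i)`
and, by Frobenius, `1 - u_{ij}^{p^α} = (1 - u_{ij})^{p^α} = ((x_j - b_i)/(x_i - b_i))^{p^α}`.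
Hence `D_α` reduces to the entrywise `p^α`-th power of `((x_i - b_i)/(x_j - b_i))`, a diagonal
matrix times the Cauchy matrix `(1/(b_i - x_j))`, and its determinant is the `p^α`-th power of a
nonzero element of `k`. A matrix with integral entries whose determinant has nonzero residue has
a determinant of norm `1`.
-/

open IsLocalRing
open scoped NormedField Valued

section Residue

variable {K : Type*} [NormedField K] [IsUltrametricDist K]

lemma mem_integer_iff_norm_le_one {x : K} : x ∈ 𝒪[K] ↔ ‖x‖ ≤ 1 :=
  NNReal.coe_le_coe.symm

lemma residue_eq_zero_iff_norm_lt_one {a : 𝒪[K]} : residue 𝒪[K] a = 0 ↔ ‖(a : K)‖ < 1 := by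
  rw [residue_eq_zero_iff, mem_maximalIdeal, mem_nonunits_iff,
    Valuation.Integer.not_isUnit_iff_valuation_lt_one]
  exact NNReal.coe_lt_coe.symm

-- A relation rather than a map `K → 𝓀[K]`, which would need junk values off the unit ball.
def HasResidue (x : K) (y : 𝓀[K]) : Prop := ∃ a : 𝒪[K], (a : K) = x ∧ residue 𝒪[K] a = y

lemma exists_hasResidue {x : K} (hx : ‖x‖ ≤ 1) : ∃ y, HasResidue x y :=
  ⟨_, ⟨x, mem_integer_iff_norm_le_one.mpr hx⟩, rfl, rfl⟩

namespace HasResidue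

variable {x x' : K} {y y' : 𝓀[K]}

lemma norm_le_one (h : HasResidue x y) : ‖x‖ ≤ 1 := by
  obtain ⟨a, rfl, -⟩ := h
  exact mem_integer_iff_norm_le_one.mp a.2

lemma eq_zero_iff (h : HasResidue x y) : y = 0 ↔ ‖x‖ < 1 := by
  obtain ⟨a, rfl, rfl⟩ := h
  exact residue_eq_zero_iff_norm_lt_one

lemma ne_zero_iff (h : HasResidue x y) : y ≠ 0 ↔ ‖x‖ = 1 := by
  rw [ne_eq, h.eq_zero_iff, not_lt]
  exact ⟨h.norm_le_one.antisymm, ge_of_eq⟩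

lemma unique (h : HasResidue x y) (h' : HasResidue x y') : y = y' := by
  obtain ⟨a, rfl, rfl⟩ := h
  obtain ⟨a', ha, rfl⟩ := h'
  rw [Subtype.ext ha.symm]

lemma natCast (n : ℕ) : HasResidue (n : K) (n : 𝓀[K]) := ⟨n, by simp, by simp⟩

lemma one : HasResidue (1 : K) (1 : 𝓀[K]) := ⟨1, by simp, by simp⟩

lemma sub (h : HasResidue x y) (h' : HasResidue x' y') : HasResidue (x - x') (y - y') := by
  obtain ⟨a, rfl, rfl⟩ := h
  obtain ⟨a', rfl, rfl⟩ := h'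
  exact ⟨a - a', by simp, by simp⟩

lemma mul (h : HasResidue x y) (h' : HasResidue x' y') : HasResidue (x * x') (y * y') := by
  obtain ⟨a, rfl, rfl⟩ := h
  obtain ⟨a', rfl, rfl⟩ := h'
  exact ⟨a * a', by simp, by simp⟩

lemma pow (h : HasResidue x y) (n : ℕ) : HasResidue (x ^ n) (y ^ n) := by
  obtain ⟨a, rfl, rfl⟩ := h
  exact ⟨a ^ n, by simp, by simp⟩

lemma inv (h : HasResidue x y) (hy : y ≠ 0) : HasResidue x⁻¹ y⁻¹ := by
  have hx : ‖x‖ = 1 := h.ne_zero_iff.mp hy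
  obtain ⟨z, hz⟩ := exists_hasResidue (x := x⁻¹) (by rw [norm_inv, hx, inv_one])
  have hyz : y * z = 1 := (h.mul hz).unique (by
    rw [mul_inv_cancel₀ (norm_ne_zero_iff.mp (hx ▸ one_ne_zero))]; exact one)
  rwa [inv_eq_of_mul_eq_one_right hyz]

lemma div (h : HasResidue x y) (h' : HasResidue x' y') (hy' : y' ≠ 0) :
    HasResidue (x / x') (y / y') := by
  simpa only [div_eq_mul_inv] using h.mul (h'.inv hy')

lemma of_norm_sub_lt_one (h : HasResidue x y) (hx' : ‖x - x'‖ < 1) : HasResidue x' y := by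
  obtain ⟨d, hd⟩ := exists_hasResidue hx'.le
  simpa [hd.eq_zero_iff.mpr hx'] using h.sub hd

end HasResidue

lemma Matrix.hasResidue_det {ι : Type*} [Fintype ι] [DecidableEq ι] {M : Matrix ι ι K}
    {N : Matrix ι ι 𝓀[K]} (h : ∀ i j, HasResidue (M i j) (N i j)) : HasResidue M.det N.det := by
  choose A hA hAN using h
  refine ⟨(Matrix.of A).det, ?_, ?_⟩
  · rw [← Subring.coe_subtype, RingHom.map_det]
    congr
    ext i j
    exact hA i j
  · rw [RingHom.map_det]
    congr
    ext i j
    exact hAN i j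

lemma charP_residueField (p : ℕ) [Fact p.Prime] (hp : ‖(p : K)‖ < 1) : CharP 𝓀[K] p :=
  (CharP.charP_iff_prime_eq_zero Fact.out).mpr ((HasResidue.natCast p).eq_zero_iff.mpr hp)

end Residue

section Field

open Polynomial Lagrange Finset

variable {F ι : Type*} [Field F] [Fintype ι] [DecidableEq ι]

theorem Matrix.det_of_inv_sub_ne_zero {x b : ι → F} (hx : Function.Injective x)
    (hb : Function.Injective b) (hxb : ∀ i j, b i ≠ x j) :
    (Matrix.of fun i j => (b i - x j)⁻¹).det ≠ 0 := by
  intro hdet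
  obtain ⟨v, hv, hCv⟩ := Matrix.exists_mulVec_eq_zero_iff.mpr hdet
  -- For a kernel vector `v`, `Q` has degree `< card ι` and `Q (b i) = (∏ l, (b i - x l)) • 0`,
  -- so `Q = 0`; but `Q (x j)` is `v j` times a nonzero product.
  set Q : F[X] := ∑ j, v j • nodal (univ.erase j) x
  have hQ_eval (t : F) : Q.eval t = ∑ j, v j * (nodal (univ.erase j) x).eval t := by
    simp [Q, eval_finsetSum]
  have hQ_b (i : ι) (_ : i ∈ univ) : Q.eval (b i) = 0 := by
    have hrow : ∑ j, (b i - x j)⁻¹ * v j = 0 := by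
      simpa [Matrix.mulVec, dotProduct] using congrFun hCv i
    rw [hQ_eval, ← mul_zero ((nodal univ x).eval (b i)), ← hrow, mul_sum]
    refine sum_congr rfl fun j _ => ?_
    rw [nodal_eq_mul_nodal_erase (mem_univ j), eval_mul, eval_sub, eval_X, eval_C]
    field_simp [sub_ne_zero.mpr (hxb i j)]
  have hQ_degree : Q.degree < #(univ : Finset ι) := by
    refine (degree_sum_le _ _).trans_lt
      ((Finset.sup_lt_iff (WithBot.bot_lt_coe _)).mpr fun j _ => ?_)
    refine (degree_smul_le _ _).trans_lt ?_
    rw [degree_nodal, card_erase_of_mem (mem_univ j)]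
    exact_mod_cast Nat.sub_lt (card_pos.mpr ⟨j, mem_univ j⟩) one_pos
  obtain ⟨j, hj⟩ := Function.ne_iff.mp hv
  have hQ_x : Q.eval (x j) = v j * (nodal (univ.erase j) x).eval (x j) := by
    rw [hQ_eval, sum_eq_single j]
    · intro l _ hl
      rw [eval_nodal_at_node (mem_erase.mpr ⟨Ne.symm hl, mem_univ j⟩), mul_zero]
    · simp
  rw [eq_zero_of_degree_lt_of_eval_index_eq_zero _ hb.injOn hQ_degree hQ_b, eval_zero,
    eq_comm] at hQ_x
  exact mul_ne_zero hj (eval_nodal_not_at_node fun l hl => hx.ne (mem_erase.mp hl).1.symm) hQ_x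

variable (p : ℕ) [ExpChar F p]

lemma one_sub_div_pow_expChar_pow {a b c : F} (hac : a ≠ c) (α : ℕ) :
    1 - ((a - b) / (a - c)) ^ p ^ α = ((b - c) / (a - c)) ^ p ^ α := by
  rw [← one_pow (p ^ α), ← sub_pow_expChar_pow]
  congr 1
  field_simp [sub_ne_zero.mpr hac]
  ring

theorem det_one_sub_div_pow_inv_ne_zero {x b : ι → F} (hx : Function.Injective x)
    (hb : Function.Injective b) (hxb : ∀ i j, x i ≠ b j) (α : ℕ) :
    (Matrix.of fun i j =>
      if i = j then 1 else (1 - ((x i - x j) / (x i - b i)) ^ p ^ α)⁻¹).det ≠ 0 := by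
  set E : Matrix ι ι F :=
    Matrix.diagonal (fun i => b i - x i) * Matrix.of fun i j => (b i - x j)⁻¹
  have hE : (Matrix.of fun i j =>
      if i = j then 1 else (1 - ((x i - x j) / (x i - b i)) ^ p ^ α)⁻¹) =
      (iterateFrobenius F p α).mapMatrix E := by
    ext i j
    by_cases hij : i = j
    · subst hij
      simp [E, iterateFrobenius_def, sub_ne_zero.mpr (hxb i i).symm]
    · simp only [E, Matrix.of_apply, hij, if_false, one_sub_div_pow_expChar_pow p (hxb i i),
        RingHom.mapMatrix_apply, Matrix.map_apply, Matrix.diagonal_mul, iterateFrobenius_def]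
      rw [← inv_pow]
      congr 1
      rw [inv_div, ← neg_sub (x i), ← neg_sub (x j), inv_neg, neg_mul_neg, div_eq_mul_inv]
  rw [hE, ← RingHom.map_det, iterateFrobenius_def, Matrix.det_mul, Matrix.det_diagonal]
  exact pow_ne_zero _ <| mul_ne_zero
    (prod_ne_zero_iff.mpr fun i _ => sub_ne_zero.mpr (hxb i i).symm)
    (Matrix.det_of_inv_sub_ne_zero hx hb fun i j => (hxb j i).symm)

end Field

theorem norm_det_one_sub_pow_inv_eq_one {K ι : Type*} [NormedField K] [IsUltrametricDist K]
    [Fintype ι] [DecidableEq ι] (p : ℕ) [Fact p.Prime] (hp : ‖(p : K)‖ < 1) (α : ℕ)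
    {x b : ι → K} (hx : ∀ i, ‖x i‖ ≤ 1) (hb : ∀ i, ‖b i‖ ≤ 1)
    (hxx : ∀ i j, i ≠ j → ‖x i - x j‖ = 1) (hbb : ∀ i j, i ≠ j → ‖b i - b j‖ = 1)
    (hxb : ∀ i j, ‖x i - b j‖ = 1) {ζ : ι → ι → K}
    (hζ : ∀ i j, i ≠ j → ‖(x i - x j) / (x i - b i) - ζ i j‖ < 1) :
    ‖(Matrix.of fun i j => if i = j then (1 : K) else (1 - ζ i j ^ p ^ α)⁻¹).det‖ = 1 := by
  have := charP_residueField p hp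
  choose x' hx' using fun i => exists_hasResidue (hx i)
  choose b' hb' using fun i => exists_hasResidue (hb i)
  have hx'b' (i j : ι) : x' i - b' j ≠ 0 := ((hx' i).sub (hb' j)).ne_zero_iff.mpr (hxb i j)
  have hx'_inj : Function.Injective x' := fun i j hij => by
    by_contra hne
    exact ((hx' i).sub (hx' j)).ne_zero_iff.mpr (hxx i j hne) (sub_eq_zero.mpr hij)
  have hb'_inj : Function.Injective b' := fun i j hij => by
    by_contra hne
    exact ((hb' i).sub (hb' j)).ne_zero_iff.mpr (hbb i j hne) (sub_eq_zero.mpr hij)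
  have hentry (i j : ι) : HasResidue (if i = j then (1 : K) else (1 - ζ i j ^ p ^ α)⁻¹)
      (if i = j then 1 else (1 - ((x' i - x' j) / (x' i - b' i)) ^ p ^ α)⁻¹) := by
    by_cases hij : i = j
    · simpa [hij] using HasResidue.one
    · have hζ' := (((hx' i).sub (hx' j)).div ((hx' i).sub (hb' i)) (hx'b' i i)).of_norm_sub_lt_one
        (hζ i j hij)
      simp only [hij, if_false]
      refine (HasResidue.one.sub (hζ'.pow _)).inv ?_
      rw [one_sub_div_pow_expChar_pow p (sub_ne_zero.mp (hx'b' i i))]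
      exact pow_ne_zero _ (div_ne_zero (hx'b' j i) (hx'b' i i))
  exact (Matrix.hasResidue_det (N := Matrix.of _) hentry).ne_zero_iff.mp
    (det_one_sub_div_pow_inv_ne_zero p hx'_inj hb'_inj (fun i j => sub_ne_zero.mp (hx'b' i j)) α)

theorem stmt_19_general (p : ℕ) [Fact (Nat.Prime p)]
    (K : Type*) [NormedField K] [IsUltrametricDist K]
    [Algebra ℚ_[p] K] (hKext : ∀ q : ℚ_[p], ‖algebraMap ℚ_[p] K q‖ = ‖q‖)
    (R : ℝ) (hR : 0 < R) (n : ℕ) (x b : Fin n → K)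
    (hxx : ∀ i j, i ≠ j → ‖x i - x j‖ = R) (hbb : ∀ i j, i ≠ j → ‖b i - b j‖ = R)
    (hxb : ∀ i j, ‖x i - b j‖ = R) (α : ℕ) (ζ : Fin n → Fin n → K)
    (hζ : ∀ i j, i ≠ j → IsOfFinOrder (ζ i j) ∧ (orderOf (ζ i j)).Coprime p ∧
      ‖(x i - x j) / (x i - b i) - ζ i j‖ < 1) :
    ‖(Matrix.of fun i j : Fin n =>
        if i = j then (1 : K) else (1 - ζ i j ^ p ^ α)⁻¹).det‖ = 1 := by
  rcases isEmpty_or_nonempty (Fin n) with hn | ⟨⟨i₀⟩⟩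
  · simp
  have hp : ‖(p : K)‖ < 1 := by
    rw [← map_natCast (algebraMap ℚ_[p] K), hKext, Padic.norm_p]
    exact inv_lt_one_of_one_lt₀ (by exact_mod_cast (Fact.out : p.Prime).one_lt)
  set t := x i₀ - b i₀
  have ht : ‖t‖ = R := hxb i₀ i₀
  have hscale (y z : K) : (y - b i₀) / t - (z - b i₀) / t = (y - z) / t := by ring
  have hnorm {y z : K} (h : ‖y - z‖ = R) : ‖(y - b i₀) / t - (z - b i₀) / t‖ = 1 := by
    rw [hscale, norm_div, h, ht, div_self hR.ne']
  refine norm_det_one_sub_pow_inv_eq_one p hp α (x := fun i => (x i - b i₀) / t)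
    (b := fun i => (b i - b i₀) / t) (fun i => ?_) (fun i => ?_)
    (fun i j hij => hnorm (hxx i j hij)) (fun i j hij => hnorm (hbb i j hij))
    (fun i j => hnorm (hxb i j)) fun i j hij => ?_
  · simpa using (hnorm (hxb i i₀)).le
  · rcases eq_or_ne i i₀ with rfl | hi
    · simp
    · simpa using (hnorm (hbb i i₀ hi)).le
  · have ht0 : t ≠ 0 := norm_ne_zero_iff.mp (ht ▸ hR.ne')
    simpa only [hscale, div_div_div_cancel_right₀ ht0] using (hζ i j hij).2.2

/-- Under the stated norm conditions on `x₁,…,x_n, b₁,…,b_n`, with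
`ζ_{ij}` the root of unity of order coprime to `p` near `(x_i - x_j)/(x_i - b_i)`, the
matrix `D_α` with diagonal entries `1` and off-diagonal entries `1/(1 - ζ_{ij}^{p^α})`
has `|det D_α|_p = 1`. -/
theorem stmt_19 (p : ℕ) [Fact (Nat.Prime p)] (hp2 : p ≠ 2)
    (K : Type*) [NormedField K] [CompleteSpace K] [IsAlgClosed K] [IsUltrametricDist K]
    [Algebra ℚ_[p] K] (hKext : ∀ q : ℚ_[p], ‖algebraMap ℚ_[p] K q‖ = ‖q‖)
    (R : ℝ) (hR : 0 < R) (n : ℕ) (x b : Fin n → K)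
    (hxx : ∀ i j, i ≠ j → ‖x i - x j‖ = R) (hbb : ∀ i j, i ≠ j → ‖b i - b j‖ = R)
    (hxb : ∀ i j, ‖x i - b j‖ = R) (α : ℕ) (ζ : Fin n → Fin n → K)
    (hζ : ∀ i j, i ≠ j → IsOfFinOrder (ζ i j) ∧ (orderOf (ζ i j)).Coprime p ∧
      ‖(x i - x j) / (x i - b i) - ζ i j‖ < 1) :
    ‖(Matrix.of fun i j : Fin n =>
        if i = j then (1 : K) else (1 - ζ i j ^ p ^ α)⁻¹).det‖ = 1 :=
  stmt_19_general p K hKext R hR n x b hxx hbb hxb α ζ hζ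
end
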